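/- arXiv:math/0004097 — 2 statements merged into one kernel-verified Lean document; each statement's English description precedes it below -/
import Mathlib

section
/- Let A = End_k(V) with V finite-dimensional over a field k of characteristic ≠ 2, and let S be a k-involution (an anti-automorphism with S² = id) on A. Then there exists a non-degenerate bilinear form (·,·) on V, either symmetric or skew-symmetric, such that (a v, w) = (v, S(a) w) for all v, w ∈ V and a ∈ A. -/
/-!
For functionals `f`, `φ` put `B v w = φ (S (f.smulRight v) w)`, where `f.smulRight v` is the
rank-one map `u ↦ f u • v`. Since `f.smulRight (a v) = a * f.smulRight v` and `S` reverses
products, `B (a v) w = B v (S a w)`; injectivity of `S` makes some such `B` nonzero. The left radical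
of a form with adjoint `S` is stable under all of `End V`, so a nonzero one is nondegenerate. As `S`
is an involution, the transposed form has the same adjoint, and a nondegenerate form is determined
by its adjoint up to a scalar (the comparison endomorphism is central in `End V`). Hence
`Bᵀ = c • B`, and transposing twice gives `c ^ 2 = 1`.
-/

open LinearMap (BilinForm IsAdjointPair)

namespace LinearMap.BilinForm

variable {k V : Type*} [Field k] [AddCommGroup V] [Module k V]

section AntiHom

variable (S : Module.End k V →ₗ[k] Module.End k V)

def formOfAntiHom (f φ : Module.Dual k V) : BilinForm k V :=
  llcomp k V V k φ ∘ₗ S ∘ₗ smulRightₗ f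

theorem formOfAntiHom_apply (f φ : Module.Dual k V) (v w : V) :
    formOfAntiHom S f φ v w = φ (S (f.smulRight v) w) :=
  rfl

theorem isAdjointPair_formOfAntiHom (hanti : ∀ a b, S (a * b) = S b * S a)
    (f φ : Module.Dual k V) (a : Module.End k V) :
    IsAdjointPair (formOfAntiHom S f φ) (formOfAntiHom S f φ) a (S a) := fun v w => by
  have hmul : f.smulRight (a v) = a * f.smulRight v := by ext; simp
  rw [formOfAntiHom_apply, formOfAntiHom_apply, hmul, hanti, Module.End.mul_apply]

theorem exists_formOfAntiHom_ne_zero [Nontrivial V] (hS : Function.Injective S) :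
    ∃ f φ : Module.Dual k V, formOfAntiHom S f φ ≠ 0 := by
  obtain ⟨v, hv⟩ := exists_ne (0 : V)
  obtain ⟨f, hf⟩ := Module.Projective.exists_dual_eq_one k hv
  have he : f.smulRight v ≠ 0 := fun h => hv (by simpa [hf] using congr($h v))
  obtain ⟨w, hw⟩ : ∃ w, S (f.smulRight v) w ≠ 0 := by
    by_contra! h
    exact he (hS (by rw [map_zero]; exact LinearMap.ext h))
  obtain ⟨φ, hφ⟩ := Module.Projective.exists_dual_eq_one k hw
  exact ⟨f, φ, fun h => one_ne_zero (hφ ▸ congr($h v w) : (1 : k) = 0)⟩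

end AntiHom

section Adjoint

variable {B : BilinForm k V} {S : Module.End k V → Module.End k V}

theorem separatingLeft_of_isAdjointPair (hBS : ∀ a : Module.End k V, IsAdjointPair B B a (S a))
    (hB : B ≠ 0) : B.SeparatingLeft := by
  intro v hv
  by_contra hv0
  obtain ⟨f, hf⟩ := Module.Projective.exists_dual_eq_one k hv0
  refine hB (LinearMap.ext₂ fun u w => ?_)
  have hu : f.smulRight u v = u := by simp [hf]
  rw [← hu, hBS, hv, LinearMap.zero_apply, LinearMap.zero_apply]

theorem isAdjointPair_flip (hinv : ∀ a, S (S a) = a)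
    (hBS : ∀ a : Module.End k V, IsAdjointPair B B a (S a)) (a : Module.End k V) :
    IsAdjointPair B.flip B.flip a (S a) := fun v w => by
  change B w (a v) = B (S a w) v
  rw [hBS, hinv]

theorem exists_eq_smul_of_isAdjointPair [FiniteDimensional k V] {B' : BilinForm k V}
    (hB : B.Nondegenerate) (hBS : ∀ a : Module.End k V, IsAdjointPair B B a (S a))
    (hB'S : ∀ a : Module.End k V, IsAdjointPair B' B' a (S a)) :
    ∃ c : k, B' = c • B := by
  set t : Module.End k V := (B.toDual hB).symm.toLinearMap ∘ₗ B'
  have ht : ∀ v w, B (t v) w = B' v w := fun v w => apply_toDual_symm_apply (hB := hB) _ _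
  have ht_central : t ∈ Subalgebra.center k (Module.End k V) := by
    refine Subalgebra.mem_center_iff.mpr fun a => LinearMap.ext fun v => ?_
    rw [← sub_eq_zero]
    refine hB.1 _ fun w => ?_
    rw [map_sub, LinearMap.sub_apply, sub_eq_zero, Module.End.mul_apply, Module.End.mul_apply,
      hBS, ht, ht, hB'S]
  obtain ⟨c, hc⟩ := (Algebra.IsCentral.mem_center_iff k).mp ht_central
  refine ⟨c, LinearMap.ext₂ fun v w => ?_⟩
  rw [← ht, hc, Module.algebraMap_end_apply, map_smul, LinearMap.smul_apply]
  rfl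

end Adjoint

theorem symm_or_antisymm_of_flip_eq_smul {B : BilinForm k V} {c : k} (hB : B ≠ 0)
    (hc : B.flip = c • B) : (∀ v w, B v w = B w v) ∨ (∀ v w, B v w = -B w v) := by
  obtain ⟨v, w, hvw⟩ : ∃ v w, B v w ≠ 0 := by
    by_contra! h
    exact hB (LinearMap.ext₂ h)
  have hc' : ∀ v w, B w v = c * B v w := fun v w => congr($hc v w)
  have hcc : c * c = 1 := by
    refine mul_right_cancel₀ hvw ?_
    rw [one_mul, mul_assoc, ← hc', ← hc']
  rcases mul_self_eq_one_iff.mp hcc with h | h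
  · exact Or.inl fun v w => by rw [hc' w v, h, one_mul]
  · exact Or.inr fun v w => by rw [hc' w v, h, neg_one_mul]

end LinearMap.BilinForm

theorem involution_is_adjoint_of_form_general
    {k : Type*} [Field k]
    {V : Type*} [AddCommGroup V] [Module k V] [FiniteDimensional k V]
    (S : Module.End k V →ₗ[k] Module.End k V)
    (hanti : ∀ a b : Module.End k V, S (a * b) = S b * S a)
    (hinv : ∀ a : Module.End k V, S (S a) = a) :
    ∃ B : LinearMap.BilinForm k V, B.Nondegenerate ∧
      ((∀ v w, B v w = B w v) ∨ (∀ v w, B v w = - B w v)) ∧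
      ∀ (a : Module.End k V) (v w : V), B (a v) w = B v (S a w) := by
  open LinearMap.BilinForm in
  rcases subsingleton_or_nontrivial V with hV | hV
  · exact ⟨0, ⟨fun v _ => Subsingleton.elim v 0, fun v _ => Subsingleton.elim v 0⟩,
      Or.inl fun _ _ => rfl, fun _ _ _ => rfl⟩
  obtain ⟨f, φ, hB0⟩ := exists_formOfAntiHom_ne_zero S (Function.LeftInverse.injective hinv)
  have hBS := isAdjointPair_formOfAntiHom S hanti f φ
  have hB : (formOfAntiHom S f φ).Nondegenerate :=
    .ofSeparatingLeft (separatingLeft_of_isAdjointPair hBS hB0)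
  obtain ⟨c, hc⟩ := exists_eq_smul_of_isAdjointPair hB hBS (isAdjointPair_flip hinv hBS)
  exact ⟨_, hB, symm_or_antisymm_of_flip_eq_smul hB0 hc, hBS⟩

/-- Albert's theorem: a `k`-involution on `End_k(V)` (char k ≠ 2) is the
adjoint map of some non-degenerate bilinear form on `V`, which is either
symmetric or skew-symmetric. -/
theorem involution_is_adjoint_of_form
    {k : Type*} [Field k] (hk : ringChar k ≠ 2)
    {V : Type*} [AddCommGroup V] [Module k V] [FiniteDimensional k V]
    (S : Module.End k V →ₗ[k] Module.End k V)
    (hanti : ∀ a b : Module.End k V, S (a * b) = S b * S a)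
    (hinv : ∀ a : Module.End k V, S (S a) = a) :
    ∃ B : LinearMap.BilinForm k V, B.Nondegenerate ∧
      ((∀ v w, B v w = B w v) ∨ (∀ v w, B v w = - B w v)) ∧
      ∀ (a : Module.End k V) (v w : V), B (a v) w = B v (S a w) :=
  involution_is_adjoint_of_form_general S hanti hinv
end

section
/- Let G be a finite group. Then 1 + t = ∑_{χ ∈ Irr(G)} ν₂(χ) χ(1), where t is the number of elements of order 2 in G, Irr(G) is the set of irreducible complex characters, and ν₂(χ) = (1/|G|) ∑_{g∈G} χ(g²) is the Frobenius–Schur indicator. -/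
/-!
Column orthogonality at the identity says that `∑ χ χ(h) χ(1)` is `|G|` for `h = 1` and `0`
otherwise, since it is the character of the regular representation, in which every
irreducible `χ` occurs `χ(1)` times. Exchanging the two sums in `∑ χ ν₂(χ) χ(1)` therefore
turns it into the number of `g` with `g² = 1`, which is `1 + t`.
-/

open CategoryTheory Limits Module

universe u

lemma CategoryTheory.exists_mono_ne_zero_not_isIso {C : Type*} [Category C]
    [HasZeroMorphisms C] {X : C} (hX : ¬IsZero X) (hs : ¬Simple X) :
    ∃ (Y : C) (f : Y ⟶ X), Mono f ∧ f ≠ 0 ∧ ¬IsIso f := by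
  by_contra! h
  refine hs ⟨fun {Y} f _ => ⟨fun _ hf => hX ?_, h Y f inferInstance⟩⟩
  rw [IsZero.iff_id_eq_zero, ← IsIso.inv_hom_id f]
  simp [hf]

namespace FDRep

section Monoid

variable {k G : Type u} [Field k] [Monoid G]

lemma hom_comp_ρ {V W : FDRep k G} (f : V ⟶ W) (g : G) :
    f.hom.hom.hom ∘ₗ V.ρ g = W.ρ g ∘ₗ f.hom.hom.hom :=
  congrArg (fun φ => φ.hom.hom) (f.comm g)

lemma hom_apply_congr {V W : FDRep k G} {φ ψ : V ⟶ W} (h : φ = ψ) (x : V) :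
    φ.hom.hom.hom x = ψ.hom.hom.hom x := by
  rw [h]

lemma isZero_iff_finrank_eq_zero (V : FDRep k G) : IsZero V ↔ finrank k V = 0 := by
  rw [IsZero.iff_id_eq_zero, finrank_zero_iff]
  refine ⟨fun h => ⟨fun v w => ?_⟩, fun _ => ?_⟩
  · have hzero (v : V) : v = 0 := hom_apply_congr h v
    rw [hzero v, hzero w]
  · ext v
    exact Subsingleton.elim _ _

lemma character_eq_zero_of_isZero {V : FDRep k G} (hV : IsZero V) : V.character = 0 := by
  have := finrank_zero_iff.mp ((isZero_iff_finrank_eq_zero V).mp hV)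
  ext g
  rw [character, Subsingleton.elim (V.ρ g) 0, map_zero, Pi.zero_apply]

lemma trace_ρ_comp_retraction {X V : FDRep k G} (i : X ⟶ V) (r : V ⟶ X) (h : i ≫ r = 𝟙 X)
    (g : G) :
    LinearMap.trace k V (V.ρ g ∘ₗ i.hom.hom.hom ∘ₗ r.hom.hom.hom) = X.character g := by
  rw [← LinearMap.comp_assoc, LinearMap.trace_comp_comm', ← hom_comp_ρ, ← LinearMap.comp_assoc]
  have hri : r.hom.hom.hom ∘ₗ i.hom.hom.hom = LinearMap.id := LinearMap.ext (hom_apply_congr h)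
  rw [hri, LinearMap.id_comp]
  rfl

lemma character_pt_of_isBilimit {X Y : FDRep k G} {c : BinaryBicone X Y} (hc : c.IsBilimit) :
    c.pt.character = X.character + Y.character := by
  ext g
  have htotal : (c.fst ≫ c.inl + c.snd ≫ c.inr).hom.hom.hom = LinearMap.id :=
    LinearMap.ext (hom_apply_congr (IsBilimit.binary_total hc))
  calc c.pt.character g
      = LinearMap.trace k c.pt (c.pt.ρ g ∘ₗ (c.fst ≫ c.inl + c.snd ≫ c.inr).hom.hom.hom) := by
        rw [htotal]
        rfl
    _ = X.character g + Y.character g := by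
        rw [← trace_ρ_comp_retraction c.inl c.fst c.inl_fst,
          ← trace_ρ_comp_retraction c.inr c.snd c.inr_snd, ← map_add, ← LinearMap.comp_add]
        rfl

lemma finrank_pt_of_isBilimit {X Y : FDRep k G} {c : BinaryBicone X Y} (hc : c.IsBilimit) :
    finrank k c.pt = finrank k X + finrank k Y := by
  let e : c.pt ≃ₗ[k] X × Y := LinearEquiv.ofLinearMap
    (c.fst.hom.hom.hom.prod c.snd.hom.hom.hom) (c.inl.hom.hom.hom.coprod c.inr.hom.hom.hom)
    (by
      ext x <;> simp only [LinearMap.comp_apply, LinearMap.prod_apply, LinearMap.coprod_apply,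
        LinearMap.inl_apply, LinearMap.inr_apply, LinearMap.id_apply, map_zero, add_zero, zero_add]
      · exact hom_apply_congr c.inl_fst x
      · exact hom_apply_congr c.inl_snd x
      · exact hom_apply_congr c.inr_fst x
      · exact hom_apply_congr c.inr_snd x)
    (LinearMap.ext (hom_apply_congr (IsBilimit.binary_total hc)))
  rw [e.finrank_eq, finrank_prod]

lemma character_ofMulAction {X : Type u} [Fintype X] [MulAction G X] (g : G) :
    (of (Representation.ofMulAction k G X)).character g = Nat.card (MulAction.fixedBy X g) := by
  classical
  change LinearMap.trace k (MonoidAlgebra k X) _ = _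
  rw [LinearMap.trace_eq_matrix_trace k (MonoidAlgebra.basis X k), Matrix.trace]
  simp [LinearMap.toMatrix_apply, Representation.ofMulAction_single, MonoidAlgebra.basis,
    MonoidAlgebra.coeffLinearEquiv, Finsupp.single_apply]

end Monoid

section FiniteGroup

variable {k G : Type u} [Field k] [Group G] [Fintype G] {ι : Type*}

theorem exists_character_eq_sum_nsmul [Fintype ι] [NeZero (Nat.card G : k)] (W : ι → FDRep k G)
    (hcomplete : ∀ X : FDRep k G, Simple X → ∃ i, Nonempty (X ≅ W i)) (V : FDRep k G) :
    ∃ n : ι → ℕ, V.character = ∑ i, n i • (W i).character := by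
  induction hd : finrank k V using Nat.strong_induction_on generalizing V with
  | _ d ih =>
  by_cases hV : IsZero V
  · exact ⟨0, by simp [character_eq_zero_of_isZero hV]⟩
  by_cases hs : Simple V
  · obtain ⟨i, ⟨e⟩⟩ := hcomplete V hs
    classical
    exact ⟨Pi.single i 1, by simp [char_iso e, Pi.single_apply]⟩
  obtain ⟨X, f, _, hf, hnotiso⟩ := exists_mono_ne_zero_not_isIso hV hs
  -- Maschke: `X` is injective, so `f` splits and `V ≅ X ⊞ cokernel f`.
  have : IsSplitMono f :=
    IsSplitMono.mk' ⟨Injective.factorThru (𝟙 X) f, Injective.comp_factorThru _ _⟩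
  have hc := isBilimitBinaryBiconeOfIsSplitMonoOfCokernel (cokernelIsCokernel f)
  have hX : finrank k X ≠ 0 := fun h =>
    hf (((isZero_iff_finrank_eq_zero X).mpr h).eq_of_src _ _)
  have hZ : finrank k (cokernel f : FDRep k G) ≠ 0 := fun h => hnotiso <| by
    have := Preadditive.epi_of_isZero_cokernel f ((isZero_iff_finrank_eq_zero _).mpr h)
    exact isIso_of_mono_of_epi f
  have hdim : d = finrank k X + finrank k (cokernel f : FDRep k G) :=
    hd ▸ finrank_pt_of_isBilimit hc
  obtain ⟨m, hm⟩ := ih _ (by omega) X rfl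
  obtain ⟨n, hn⟩ := ih _ (by omega) (cokernel f) rfl
  have hχ : V.character = X.character + (cokernel f).character := character_pt_of_isBilimit hc
  refine ⟨m + n, ?_⟩
  rw [hχ, hm, hn]
  simp [add_smul, Finset.sum_add_distrib]

lemma character_ofMulAction_self [DecidableEq G] (g : G) :
    (of (Representation.ofMulAction k G G)).character g =
      if g = 1 then (Nat.card G : k) else 0 := by
  rw [character_ofMulAction]
  split_ifs with h
  · subst h
    simp
  · simp [MulAction.fixedBy, h]

lemma card_inv_mul_sum_character_ofMulAction_self_mul [NeZero (Nat.card G : k)]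
    (V : FDRep k G) :
    (Nat.card G : k)⁻¹ * ∑ g : G, (of (Representation.ofMulAction k G G)).character g *
      V.character g⁻¹ = V.character 1 := by
  classical
  rw [Fintype.sum_eq_single 1 fun g hg => by rw [character_ofMulAction_self, if_neg hg, zero_mul],
    character_ofMulAction_self, if_pos rfl, inv_one, ← mul_assoc,
    inv_mul_cancel₀ (NeZero.ne _), one_mul]

lemma card_inv_mul_sum_character_mul_character_inv [IsAlgClosed k] [NeZero (Nat.card G : k)]
    [DecidableEq ι] (W : ι → FDRep k G) (hsimple : ∀ i, Simple (W i))
    (hdistinct : ∀ i j, i ≠ j → IsEmpty (W i ≅ W j)) (i j : ι) :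
    (Nat.card G : k)⁻¹ * ∑ g : G, (W i).character g * (W j).character g⁻¹ =
      if i = j then 1 else 0 := by
  have := invertibleOfNonzero (NeZero.ne (Nat.card G : k))
  have := hsimple i
  have := hsimple j
  rw [char_orthonormal]
  by_cases hij : i = j
  · subst hij
    simp [Nonempty.intro (Iso.refl (W i))]
  · simp [hij, not_nonempty_iff.mpr (hdistinct i j hij)]

theorem sum_character_mul_character_one [Fintype ι] [IsAlgClosed k] [NeZero (Nat.card G : k)]
    [DecidableEq G] (W : ι → FDRep k G) (hsimple : ∀ i, Simple (W i))
    (hdistinct : ∀ i j, i ≠ j → IsEmpty (W i ≅ W j))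
    (hcomplete : ∀ X : FDRep k G, Simple X → ∃ i, Nonempty (X ≅ W i)) (h : G) :
    ∑ i, (W i).character h * (W i).character 1 = if h = 1 then (Nat.card G : k) else 0 := by
  classical
  set R := of (Representation.ofMulAction k G G)
  obtain ⟨n, hn⟩ := exists_character_eq_sum_nsmul W hcomplete R
  have hR (g : G) : R.character g = ∑ j, (n j : k) * (W j).character g := by
    simp [hn]
  have hmult (i : ι) : (n i : k) = (W i).character 1 := by
    calc (n i : k)
        = ∑ j, (n j : k) * ((Nat.card G : k)⁻¹ *
            ∑ g : G, (W j).character g * (W i).character g⁻¹) := by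
          simp only [card_inv_mul_sum_character_mul_character_inv W hsimple hdistinct, mul_ite,
            mul_one, mul_zero, Finset.sum_ite_eq', Finset.mem_univ, if_true]
      _ = (Nat.card G : k)⁻¹ * ∑ g : G, R.character g * (W i).character g⁻¹ := by
          simp only [hR, Finset.mul_sum, Finset.sum_mul]
          rw [Finset.sum_comm]
          exact Finset.sum_congr rfl fun j _ => Finset.sum_congr rfl fun g _ => by ring
      _ = (W i).character 1 := card_inv_mul_sum_character_ofMulAction_self_mul _
  calc ∑ i, (W i).character h * (W i).character 1
      = R.character h := by simp only [hR, hmult, mul_comm]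
    _ = _ := character_ofMulAction_self h

theorem sum_card_inv_mul_sum_character_comp_mul_character_one [Fintype ι] [IsAlgClosed k]
    [NeZero (Nat.card G : k)] (W : ι → FDRep k G) (hsimple : ∀ i, Simple (W i))
    (hdistinct : ∀ i j, i ≠ j → IsEmpty (W i ≅ W j))
    (hcomplete : ∀ X : FDRep k G, Simple X → ∃ i, Nonempty (X ≅ W i)) (f : G → G) :
    ∑ i, ((Nat.card G : k)⁻¹ * ∑ g : G, (W i).character (f g)) * (W i).character 1 =
      Nat.card {g : G // f g = 1} := by
  classical
  calc ∑ i, ((Nat.card G : k)⁻¹ * ∑ g : G, (W i).character (f g)) * (W i).character 1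
      = (Nat.card G : k)⁻¹ * ∑ g : G, ∑ i, (W i).character (f g) * (W i).character 1 := by
        simp only [Finset.mul_sum, Finset.sum_mul, mul_assoc]
        exact Finset.sum_comm
    _ = (Nat.card G : k)⁻¹ * ∑ g : G, if f g = 1 then (Nat.card G : k) else 0 := by
        simp only [sum_character_mul_character_one W hsimple hdistinct hcomplete]
    _ = Nat.card {g : G // f g = 1} := by
        rw [Finset.sum_ite, Finset.sum_const_zero, add_zero, Finset.sum_const, nsmul_eq_mul,
          mul_left_comm, inv_mul_cancel₀ (NeZero.ne _), mul_one, Nat.card_eq_fintype_card,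
          Fintype.card_subtype]

end FiniteGroup

end FDRep

lemma card_subtype_eq_one_add_card_subtype_ne {α : Type*} [Finite α] {p : α → Prop} {a : α}
    (ha : p a) : Nat.card {x // p x} = 1 + Nat.card {x // p x ∧ x ≠ a} := by
  rw [add_comm]
  exact (Set.ncard_sdiff_singleton_add_one (s := {x | p x}) ha).symm

/-- `1 + t = ∑_{χ ∈ Irr(G)} ν₂(χ) χ(1)` where `t` is the number of elements of
order two of `G`, the sum is over a complete set of representatives of the
isomorphism classes of irreducible complex representations, and `ν₂` is the
Frobenius–Schur indicator. -/
theorem count_involutions_eq_sum_indicators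
    {G : Type} [Group G] [Fintype G]
    {ι : Type} [Fintype ι] (W : ι → FDRep ℂ G)
    (hsimple : ∀ i, Simple (W i))
    (hdistinct : ∀ i j, i ≠ j → IsEmpty (W i ≅ W j))
    (hcomplete : ∀ X : FDRep ℂ G, Simple X → ∃ i, Nonempty (X ≅ W i)) :
    (1 + (Nat.card {g : G // g * g = 1 ∧ g ≠ 1}) : ℂ) =
      ∑ i, ((Fintype.card G : ℂ)⁻¹ * ∑ g : G, (W i).character (g * g)) *
        (W i).character 1 := by
  rw [← Nat.card_eq_fintype_card, FDRep.sum_card_inv_mul_sum_character_comp_mul_character_one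
    W hsimple hdistinct hcomplete fun g => g * g]
  exact_mod_cast
    (card_subtype_eq_one_add_card_subtype_ne (p := fun g : G => g * g = 1) (mul_one 1)).symm
end
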